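/- For a vertex-weighted graph (G,w) and any edge e of G, the Tutte symmetric function satisfies the deletion-contraction relation XB_{(G,w)} = XB_{(G∖e, w)} + t · XB_{(G/e, w/e)}. -/

import Mathlib

open scoped Classical
open Finset

structure WGraph where
  V : Type
  E : Type
  [fV : Fintype V]
  [fE : Fintype E]
  ends : E → Sym2 V
  w : V → ℕ
  wpos : ∀ v, 0 < w v

attribute [instance] WGraph.fV WGraph.fE

namespace WGraph

variable (G : WGraph)

/-- The monomial (exponent vector) attached to a colouring. -/
noncomputable def mono (κ : G.V → ℕ) : ℕ →₀ ℕ := ∑ v : G.V, Finsupp.single (κ v) (G.w v)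

/-- A colouring is proper if the endpoints of every edge receive distinct colours. -/
def Proper {C : Type} (κ : G.V → C) : Prop := ∀ e : G.E, ¬ ((G.ends e).map κ).IsDiag

noncomputable def colorings (d : ℕ →₀ ℕ) : Finset (G.V → ℕ) :=
  (Fintype.piFinset fun _ : G.V => d.support).filter (fun κ => G.mono κ = d)

/-- The chromatic symmetric function of a vertex-weighted graph. -/
noncomputable def X (R : Type) [CommRing R] : MvPowerSeries ℕ R :=
  fun d => (((G.colorings d).filter (fun κ => G.Proper κ)).card : R)

end WGraph
namespace WGraph

/-- The number of monochromatic ("bad") edges of a colouring. -/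
noncomputable def badEdges (G : WGraph) (κ : G.V → ℕ) : ℕ :=
  (Finset.univ.filter fun e : G.E => ((G.ends e).map κ).IsDiag).card

/-- The Tutte (bad-colouring) symmetric function
`XB_{(G,w)} = Σ_κ (1+t)^{e(κ)} Π_v x_{κ(v)}^{w(v)}`, with coefficients in `ℤ[t]`. -/
noncomputable def XB (G : WGraph) : MvPowerSeries ℕ (Polynomial ℤ) :=
  fun d => ∑ κ ∈ G.colorings d, (1 + Polynomial.X) ^ G.badEdges κ

end WGraph
namespace WGraph

/-- Deletion of an edge. -/
noncomputable def deleteEdge (G : WGraph) (e : G.E) : WGraph where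
  V := G.V
  E := {f : G.E // f ≠ e}
  ends f := G.ends f.1
  w := G.w
  wpos := G.wpos

/-- Contraction of a non-loop edge `e` with endpoints `u ≠ v`:
the vertex `v` is removed and merged into `u`, whose weight becomes `w u + w v`. -/
noncomputable def contract (G : WGraph) (e : G.E) (u v : G.V) (huv : u ≠ v) : WGraph where
  V := {x : G.V // x ≠ v}
  E := {f : G.E // f ≠ e}
  ends f := (G.ends f.1).map (fun x => if h : x = v then ⟨u, huv⟩ else ⟨x, h⟩)
  w x := if x.1 = u then G.w u + G.w v else G.w x.1
  wpos x := by
    try dsimp only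
    split
    · exact Nat.add_pos_left (G.wpos u) _
    · exact G.wpos _

end WGraph

namespace WGraph

/-- Extension of a colouring of the contracted graph to the original graph. -/
noncomputable def extCol (G : WGraph) {u v : G.V} (huv : u ≠ v)
    (κ' : {x : G.V // x ≠ v} → ℕ) : G.V → ℕ :=
  fun x => if h : x = v then κ' ⟨u, huv⟩ else κ' ⟨x, h⟩

lemma extCol_restrict (G : WGraph) {u v : G.V} (huv : u ≠ v) (κ : G.V → ℕ)
    (hκ : κ u = κ v) : G.extCol huv (fun x => κ x.1) = κ := by
  funext x
  by_cases h : x = v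
  · subst h; simp [extCol, ← hκ]
  · simp [extCol, h]

lemma badEdges_split (G : WGraph) (e : G.E) (κ : G.V → ℕ) :
    G.badEdges κ = (G.deleteEdge e).badEdges κ
      + (if ((G.ends e).map κ).IsDiag then 1 else 0) := by
  classical
  unfold badEdges
  rw [Finset.card_filter, Finset.card_filter]
  have h1 : (∑ f : G.E, if ((G.ends f).map κ).IsDiag then 1 else 0)
      = (∑ f ∈ Finset.univ.erase e, if ((G.ends f).map κ).IsDiag then 1 else 0)
        + (if ((G.ends e).map κ).IsDiag then 1 else 0) :=
    (Finset.sum_erase_add _ _ (Finset.mem_univ e)).symm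
  rw [h1]
  congr 1
  rw [Finset.sum_subtype (p := fun f => f ≠ e) (Finset.univ.erase e)
    (by simp) (fun f => if ((G.ends f).map κ).IsDiag then 1 else 0)]
  rfl

lemma colorings_deleteEdge (G : WGraph) (e : G.E) (d : ℕ →₀ ℕ) :
    (G.deleteEdge e).colorings d = G.colorings d := rfl

lemma mono_contract (G : WGraph) (e : G.E) {u v : G.V} (huv : u ≠ v)
    (κ' : {x : G.V // x ≠ v} → ℕ) :
    (G.contract e u v huv).mono κ' = G.mono (G.extCol huv κ') := by
  classical
  unfold mono
  have hR : G.mono (G.extCol huv κ') = G.mono (G.extCol huv κ') := rfl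
  -- RHS: split off the vertex v and convert to a sum over the subtype
  have hsub : ∀ (g : G.V → (ℕ →₀ ℕ)),
      (∑ x ∈ Finset.univ.erase v, g x) = ∑ x : {x : G.V // x ≠ v}, g x.1 := by
    intro g
    exact Finset.sum_subtype (p := fun x => x ≠ v) _ (by simp) g
  have hRHS : (∑ x : G.V, Finsupp.single (G.extCol huv κ' x) (G.w x))
      = (∑ x : {x : G.V // x ≠ v}, Finsupp.single (κ' x) (G.w x.1))
        + Finsupp.single (κ' ⟨u, huv⟩) (G.w v) := by
    rw [← Finset.sum_erase_add _ _ (Finset.mem_univ v)]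
    congr 1
    · rw [hsub]
      apply Finset.sum_congr rfl
      intro x _
      simp [extCol, x.2]
    · simp [extCol]
  have hLHS : (∑ x : {x : G.V // x ≠ v},
        Finsupp.single (κ' x) ((G.contract e u v huv).w x))
      = (∑ x : {x : G.V // x ≠ v}, Finsupp.single (κ' x) (G.w x.1))
        + Finsupp.single (κ' ⟨u, huv⟩) (G.w v) := by
    have : ∀ x : {x : G.V // x ≠ v},
        Finsupp.single (κ' x) ((G.contract e u v huv).w x)
          = Finsupp.single (κ' x) (G.w x.1)
            + (if x = ⟨u, huv⟩ then Finsupp.single (κ' x) (G.w v) else 0) := by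
      intro x
      show Finsupp.single (κ' x) (if x.1 = u then G.w u + G.w v else G.w x.1) = _
      by_cases h : x = ⟨u, huv⟩
      · subst h
        simp [Finsupp.single_add]
      · have h' : x.1 ≠ u := fun hc => h (Subtype.ext hc)
        simp [h, h']
    rw [Finset.sum_congr rfl (fun x _ => this x), Finset.sum_add_distrib,
      Finset.sum_ite_eq' Finset.univ (⟨u, huv⟩ : {x : G.V // x ≠ v})]
    simp
  rw [hRHS]; exact hLHS

lemma badEdges_contract (G : WGraph) (e : G.E) {u v : G.V} (huv : u ≠ v)
    (κ' : {x : G.V // x ≠ v} → ℕ) :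
    (G.contract e u v huv).badEdges κ' = (G.deleteEdge e).badEdges (G.extCol huv κ') := by
  classical
  unfold badEdges
  congr 1
  apply Finset.filter_congr
  intro f _
  show (((G.ends f.1).map _).map κ').IsDiag ↔ ((G.ends f.1).map (G.extCol huv κ')).IsDiag
  rw [Sym2.map_map]
  have : (κ' ∘ fun x => if h : x = v then (⟨u, huv⟩ : {x : G.V // x ≠ v}) else ⟨x, h⟩)
      = G.extCol huv κ' := by
    funext x
    by_cases h : x = v <;> simp [extCol, h]
  rw [this]

end WGraph

open WGraph in
/-- **Deletion-contraction for the Tutte symmetric function**: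
`XB_{(G,w)} = XB_{(G∖e,w)} + t ⋅ XB_{(G/e,w/e)}` for any edge `e`
(for a loop `e`, the contraction `G/e` is `G∖e`). -/
theorem tutte_deletion_contraction (G : WGraph) (e : G.E) (u v : G.V)
    (he : G.ends e = s(u, v)) :
    G.XB = (G.deleteEdge e).XB +
      (MvPowerSeries.C Polynomial.X : MvPowerSeries ℕ (Polynomial ℤ)) *
        (if h : u = v then G.deleteEdge e else G.contract e u v h).XB := by
  classical
  funext d
  have hadd : ∀ (φ ψ : MvPowerSeries ℕ (Polynomial ℤ)), (φ + ψ) d = φ d + ψ d := fun _ _ => rfl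
  have hCmul : ∀ (φ : MvPowerSeries ℕ (Polynomial ℤ)),
      ((MvPowerSeries.C Polynomial.X : MvPowerSeries ℕ (Polynomial ℤ)) * φ) d = Polynomial.X * φ d :=
    fun φ => MvPowerSeries.coeff_C_mul d φ Polynomial.X
  rw [hadd, hCmul]
  by_cases h : u = v
  · subst h
    rw [dif_pos rfl]
    show (∑ κ ∈ G.colorings d, (1 + Polynomial.X) ^ G.badEdges κ)
      = (∑ κ ∈ (G.deleteEdge e).colorings d, (1 + Polynomial.X) ^ (G.deleteEdge e).badEdges κ)
        + Polynomial.X *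
          ∑ κ ∈ (G.deleteEdge e).colorings d, (1 + Polynomial.X) ^ (G.deleteEdge e).badEdges κ
    rw [Finset.mul_sum, ← Finset.sum_add_distrib]
    apply Finset.sum_congr rfl
    intro κ _
    have hb : G.badEdges κ = (G.deleteEdge e).badEdges κ + 1 := by
      rw [G.badEdges_split e κ, he]
      simp
    rw [hb, pow_succ]
    ring
  · rw [dif_neg h]
    have hG : G.XB d = ∑ κ ∈ G.colorings d, (1 + Polynomial.X) ^ G.badEdges κ := rfl
    have hdel : (G.deleteEdge e).XB d
        = ∑ κ ∈ G.colorings d, (1 + Polynomial.X) ^ (G.deleteEdge e).badEdges κ := rfl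
    have hcon : (G.contract e u v h).XB d
        = ∑ κ ∈ (G.contract e u v h).colorings d,
            (1 + Polynomial.X) ^ (G.contract e u v h).badEdges κ := rfl
    rw [hG, hdel, hcon]
    -- the contraction sum equals a sum over colourings of G with κ u = κ v
    have hbij : (∑ κ ∈ (G.contract e u v h).colorings d,
          (1 + Polynomial.X : Polynomial ℤ) ^ (G.contract e u v h).badEdges κ)
        = ∑ κ ∈ (G.colorings d).filter (fun κ => κ u = κ v),
            (1 + Polynomial.X) ^ (G.deleteEdge e).badEdges κ := by
      refine Finset.sum_nbij' (G.extCol h)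
        (fun (κ : G.V → ℕ) (x : {x : G.V // x ≠ v}) => κ x.1) ?_ ?_ ?_ ?_ ?_
      · intro κ' hκ'
        rw [colorings, Finset.mem_filter, Fintype.mem_piFinset] at hκ'
        rw [Finset.mem_filter, colorings, Finset.mem_filter, Fintype.mem_piFinset]
        refine ⟨⟨fun x => ?_, ?_⟩, ?_⟩
        · by_cases hx : x = v <;> simp only [extCol]
          · rw [dif_pos hx]; exact hκ'.1 _
          · rw [dif_neg hx]; exact hκ'.1 _
        · rw [← G.mono_contract e h κ']; exact hκ'.2
        · show G.extCol h κ' u = G.extCol h κ' v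
          simp [extCol, h]
      · intro κ hκ
        rw [Finset.mem_filter, colorings, Finset.mem_filter, Fintype.mem_piFinset] at hκ
        unfold colorings
        refine Finset.mem_filter.mpr (And.imp Fintype.mem_piFinset.mpr id ?_)
        refine ⟨fun x => hκ.1.1 x.1, ?_⟩
        rw [G.mono_contract e h, G.extCol_restrict h κ hκ.2]
        exact hκ.1.2
      · intro κ' _
        funext x
        simp [extCol, x.2]
      · intro κ hκ
        rw [Finset.mem_filter] at hκ
        exact G.extCol_restrict h κ hκ.2
      · intro κ' _
        rw [G.badEdges_contract e h κ']
    rw [hbij]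
    -- now split the sum over colourings of G according to κ u = κ v
    have hsplit1 := Finset.sum_filter_add_sum_filter_not (G.colorings d)
      (fun κ => κ u = κ v) (fun κ => (1 + Polynomial.X : Polynomial ℤ) ^ G.badEdges κ)
    have hsplit2 := Finset.sum_filter_add_sum_filter_not (G.colorings d)
      (fun κ => κ u = κ v)
      (fun κ => (1 + Polynomial.X : Polynomial ℤ) ^ (G.deleteEdge e).badEdges κ)
    rw [← hsplit1, ← hsplit2]
    have heq : ∀ κ ∈ (G.colorings d).filter (fun κ => κ u = κ v),
        (1 + Polynomial.X : Polynomial ℤ) ^ G.badEdges κ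
          = (1 + Polynomial.X) ^ (G.deleteEdge e).badEdges κ
            + Polynomial.X * (1 + Polynomial.X) ^ (G.deleteEdge e).badEdges κ := by
      intro κ hκ
      rw [Finset.mem_filter] at hκ
      have hb : G.badEdges κ = (G.deleteEdge e).badEdges κ + 1 := by
        rw [G.badEdges_split e κ, he]
        simp [Sym2.map_pair_eq, hκ.2]
      rw [hb, pow_succ]; ring
    have hneq : ∀ κ ∈ (G.colorings d).filter (fun κ => ¬ κ u = κ v),
        (1 + Polynomial.X : Polynomial ℤ) ^ G.badEdges κ
          = (1 + Polynomial.X) ^ (G.deleteEdge e).badEdges κ := by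
      intro κ hκ
      rw [Finset.mem_filter] at hκ
      have hb : G.badEdges κ = (G.deleteEdge e).badEdges κ := by
        rw [G.badEdges_split e κ, he]
        simp [Sym2.map_pair_eq, Sym2.mk_isDiag_iff, hκ.2]
      rw [hb]
    rw [Finset.sum_congr rfl heq, Finset.sum_congr rfl hneq, Finset.sum_add_distrib,
      Finset.mul_sum]
    ring
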